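/- With notation as in the E₇ setup, let a = (3/4, −1/4, …, −1/4, 3/4) ∈ V₇ and let A = W₇·a be its orbit under the Weyl group W₇ of E₇. Then A has exactly 56 elements, namely all vectors of ℝ^8 obtained by permuting the coordinates of ±(3/4, 3/4, −1/4, −1/4, −1/4, −1/4, −1/4, −1/4); equivalently, A consists of all vectors of V₇ having, up to a global sign, exactly two coordinates equal to 3/4 and six coordinates equal to −1/4. -/

import Mathlib

open scoped RealInnerProductSpace

/-- The linear functional `x ↦ ∑ i, x i` on `ℝ^8`. -/
noncomputable def coordSum8 : EuclideanSpace ℝ (Fin 8) →ₗ[ℝ] ℝ where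
  toFun x := ∑ i, x i
  map_add' x y := by simp [Finset.sum_add_distrib]
  map_smul' c x := by simp [Finset.mul_sum]

/-- The hyperplane `V₇ = {x ∈ ℝ^8 : ∑ x_i = 0}`. -/
noncomputable def V7 : Submodule ℝ (EuclideanSpace ℝ (Fin 8)) :=
  LinearMap.ker coordSum8

/-- The `E₈` root lattice `{x ∈ ℤ^8 ∪ (1/2 + ℤ)^8 : ∑ x_i ∈ 2ℤ}`. -/
def E8lat : Set (EuclideanSpace ℝ (Fin 8)) :=
  {x | ((∀ i, ∃ m : ℤ, x i = (m : ℝ)) ∨ (∀ i, ∃ m : ℤ, x i = (m : ℝ) + 1 / 2)) ∧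
    ∃ m : ℤ, ∑ i, x i = 2 * (m : ℝ)}

/-- The root system `R₇ = {α ∈ E₇ : (α, α) = 2}` of type `E₇`, where `E₇ = E₈ ∩ V₇`. -/
noncomputable def R7 : Set (EuclideanSpace ℝ (Fin 8)) :=
  {α | α ∈ E8lat ∧ α ∈ V7 ∧ ⟪α, α⟫ = 2}

/-- The Weyl group `W₇ ⊂ O(V₇)` of `E₇`, generated by the reflections
`s_α(v) = v − (v, α)α`, `α ∈ R₇`. -/
noncomputable def W7 : Subgroup (V7 ≃ₗᵢ[ℝ] V7) :=
  Subgroup.closure {w | ∃ α ∈ R7, ∀ v : V7,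
    ((w v : EuclideanSpace ℝ (Fin 8))) = (v : EuclideanSpace ℝ (Fin 8)) -
      ⟪(v : EuclideanSpace ℝ (Fin 8)), α⟫ • α}

/-- The vector `a = (3/4, −1/4, −1/4, −1/4, −1/4, −1/4, −1/4, 3/4)`, as an element
of `V₇`. -/
noncomputable def aV : V7 :=
  ⟨WithLp.toLp 2 (![3/4, -1/4, -1/4, -1/4, -1/4, -1/4, -1/4, 3/4] : Fin 8 → ℝ), by
    show coordSum8 _ = 0
    show (∑ i : Fin 8, _) = (0 : ℝ)
    simp only [Fin.sum_univ_succ, Fin.sum_univ_zero, Matrix.cons_val_zero,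
      Matrix.cons_val_succ]
    norm_num⟩

/-- The vector `(3/4, 3/4, −1/4, −1/4, −1/4, −1/4, −1/4, −1/4)`. -/
noncomputable def baseVec : Fin 8 → ℝ :=
  ![3/4, 3/4, -1/4, -1/4, -1/4, -1/4, -1/4, -1/4]

/-!
Every root `α ∈ R₇` has `⟪x, α⟫ ∈ ℤ` whenever `x ∈ V₇` has all its coordinates in a single coset
`r + ℤ` with `r ∈ 1/4 + ½ℤ`; the reflection `x ↦ x - ⟪x, α⟫ α` therefore translates `x` by an
integral multiple of `α`, which keeps the coordinates in such a coset (an integral root keeps `r`,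
a half-integral one shifts it by a multiple of `1/2`). Since `a` is of this kind and `W₇` preserves
norms, every vector of the orbit has all coordinates in `{3/4, -1/4}` or all in `{-3/4, 1/4}`, each
of square at least `1/16`; the norm `3/2` and `∑ xᵢ = 0` then leave exactly the vectors
`±(3/4, 3/4, -1/4, …, -1/4)` up to permutation. Conversely, the reflections in the roots `eₚ - e_q`
permute coordinates, and one half-integral root sends `a` to minus a permutation of `a`.
-/

local notation "ℝ⁸" => EuclideanSpace ℝ (Fin 8)

open Finset Equiv
open scoped Pointwise

lemma EuclideanSpace.real_inner_eq_sum {ι : Type*} [Fintype ι] (x y : EuclideanSpace ℝ ι) :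
    ⟪x, y⟫ = ∑ i, x i * y i := by
  simp [PiLp.inner_apply, mul_comm]

lemma mem_V7_iff (x : ℝ⁸) : x ∈ V7 ↔ ∑ i, x i = 0 := Iff.rfl

lemma coe_reflection_of_mem_R7 {α : ℝ⁸} (hα : α ∈ R7) (v : V7) :
    ((ℝ ∙ (⟨α, hα.2.1⟩ : V7))ᗮ.reflection v : ℝ⁸) = v - ⟪(v : ℝ⁸), α⟫ • α := by
  have hnorm : ‖(⟨α, hα.2.1⟩ : V7)‖ ^ 2 = 2 := by
    rw [Submodule.coe_norm, ← real_inner_self_eq_norm_sq, hα.2.2]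
  rw [Submodule.reflection_orthogonal_apply, Submodule.reflection_singleton_apply,
    RCLike.ofReal_real_eq_id, id_eq, hnorm]
  simp only [Submodule.coe_neg, Submodule.coe_sub, Submodule.coe_smul_of_tower,
    Submodule.coe_inner]
  rw [real_inner_comm]
  module

lemma reflection_mem_W7 {α : ℝ⁸} (hα : α ∈ R7) :
    (ℝ ∙ (⟨α, hα.2.1⟩ : V7))ᗮ.reflection ∈ W7 :=
  Subgroup.subset_closure ⟨α, hα, coe_reflection_of_mem_R7 hα⟩

theorem W7_preserves {P : ℝ⁸ → Prop}
    (hP : ∀ α ∈ R7, ∀ x : V7, P x → P (x - ⟪(x : ℝ⁸), α⟫ • α))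
    {w : V7 ≃ₗᵢ[ℝ] V7} (hw : w ∈ W7) (x : V7) (hx : P x) : P (w x) := by
  induction hw using Subgroup.closure_induction'' generalizing x with
  | mem w hw =>
    obtain ⟨α, hα, hwα⟩ := hw
    rw [hwα]
    exact hP α hα x hx
  | inv_mem w hw =>
    obtain ⟨α, hα, hwα⟩ := hw
    have hw_eq : w = (ℝ ∙ (⟨α, hα.2.1⟩ : V7))ᗮ.reflection := by
      ext v : 2
      rw [hwα, coe_reflection_of_mem_R7 hα]
    rw [hw_eq, Submodule.reflection_inv, coe_reflection_of_mem_R7 hα]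
    exact hP α hα x hx
  | one => exact hx
  | mul u v _ _ hu hv => exact hu _ (hv x hx)

def IsQuarterCoset (x : ℝ⁸) : Prop :=
  ∃ n : ℤ, ∀ i, ∃ m : ℤ, x i = m + (2 * n + 1) / 4

lemma inner_eq_sum_intCast_mul {ι : Type*} [Fintype ι] {x α : EuclideanSpace ℝ ι} {m : ι → ℤ}
    {r : ℝ} (hx : ∀ i, x i = m i + r) (hα : ∑ i, α i = 0) :
    ⟪x, α⟫ = ∑ i, (m i : ℝ) * α i := by
  simp only [EuclideanSpace.real_inner_eq_sum, hx, add_mul, sum_add_distrib, ← mul_sum, hα,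
    mul_zero, add_zero]

lemma IsQuarterCoset.exists_inner_eq_intCast {x α : ℝ⁸} (hx : IsQuarterCoset x) (hx0 : x ∈ V7)
    (hα : α ∈ E8lat) (hα0 : α ∈ V7) : ∃ k : ℤ, ⟪x, α⟫ = k := by
  obtain ⟨n, hx⟩ := hx
  choose m hm using hx
  rw [inner_eq_sum_intCast_mul hm hα0]
  rcases hα.1 with hint | hhalf
  · choose a ha using hint
    exact ⟨∑ i, m i * a i, by simp [ha]⟩
  · choose b hb using hhalf
    have hsum_m : ∑ i, (m i : ℝ) = -(2 * (2 * n + 1)) := by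
      have := (mem_V7_iff x).1 hx0
      simp only [hm, sum_add_distrib, sum_const, card_univ, Fintype.card_fin, nsmul_eq_mul] at this
      linarith
    refine ⟨∑ i, m i * b i - (2 * n + 1), ?_⟩
    simp only [hb, mul_add, sum_add_distrib, ← sum_mul, hsum_m]
    push_cast
    ring

lemma IsQuarterCoset.sub_intCast_smul {x α : ℝ⁸} (hx : IsQuarterCoset x) (hα : α ∈ E8lat)
    (k : ℤ) : IsQuarterCoset (x - (k : ℝ) • α) := by
  obtain ⟨n, hx⟩ := hx
  choose m hm using hx
  rcases hα.1 with hint | hhalf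
  · choose a ha using hint
    exact ⟨n, fun i => ⟨m i - k * a i, by
      simp only [PiLp.sub_apply, PiLp.smul_apply, smul_eq_mul, hm, ha]; push_cast; ring⟩⟩
  · choose b hb using hhalf
    exact ⟨n - k, fun i => ⟨m i - k * b i, by
      simp only [PiLp.sub_apply, PiLp.smul_apply, smul_eq_mul, hm, hb]; push_cast; ring⟩⟩

lemma IsQuarterCoset.W7_apply {x : V7} (hx : IsQuarterCoset x) {w : V7 ≃ₗᵢ[ℝ] V7}
    (hw : w ∈ W7) : IsQuarterCoset (w x) := by
  refine W7_preserves (fun α hα y hy => ?_) hw x hx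
  obtain ⟨k, hk⟩ := hy.exists_inner_eq_intCast y.2 hα.1 hα.2.1
  rw [hk]
  exact hy.sub_intCast_smul hα.1 k

lemma card_filter_eq_three_of_sum_eq_zero {y : Fin 8 → ℤ} (hy : ∀ i, y i = 3 ∨ y i = -1)
    (hsum : ∑ i, y i = 0) : (univ.filter (y · = 3)).card = 2 := by
  have hy' : ∀ i, y i = 4 * (if y i = 3 then 1 else 0) - 1 := fun i => by
    rcases hy i with h | h <;> simp [h]
  rw [sum_congr rfl fun i _ => hy' i, sum_sub_distrib, ← mul_sum, sum_boole] at hsum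
  simp only [sum_const, card_univ, Fintype.card_fin, nsmul_eq_mul] at hsum
  omega

lemma sq_add_seven_le_sum_sq {k : Fin 8 → ℤ} (hk : ∀ i, k i ≠ 0) (i : Fin 8) :
    k i ^ 2 + 7 ≤ ∑ j, k j ^ 2 := by
  have h := card_nsmul_le_sum (univ.erase i) (fun j => k j ^ 2) 1 fun j _ => by
    rcases (hk j).lt_or_gt with h | h <;> nlinarith
  rw [card_erase_of_mem (mem_univ i), card_univ, Fintype.card_fin,
    show (8 - 1) • (1 : ℤ) = 7 by rfl] at h
  rw [← add_sum_erase _ _ (mem_univ i)]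
  linarith

lemma exists_sign_finset_of_sum_sq_eq (m : Fin 8 → ℤ) (n : ℤ)
    (hsum : ∑ i, (4 * m i + 2 * n + 1) = 0) (hsq : ∑ i, (4 * m i + 2 * n + 1) ^ 2 = 24) :
    ∃ s : ℤ, (s = 1 ∨ s = -1) ∧ ∃ T : Finset (Fin 8), T.card = 2 ∧
      ∀ i, 4 * m i + 2 * n + 1 = s * if i ∈ T then 3 else -1 := by
  have hk_mem : ∀ i, let k := 4 * m i + 2 * n + 1
      k = 3 ∨ k = 1 ∨ k = -1 ∨ k = -3 := fun i => by
    have hle := hsq ▸ sq_add_seven_le_sum_sq (k := fun j => 4 * m j + 2 * n + 1)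
      (fun j => by omega) i
    have : -4 ≤ 4 * m i + 2 * n + 1 ∧ 4 * m i + 2 * n + 1 ≤ 4 := ⟨by nlinarith, by nlinarith⟩
    omega
  obtain ⟨s, hs, hsk⟩ : ∃ s : ℤ, (s = 1 ∨ s = -1) ∧
      ∀ i, s * (4 * m i + 2 * n + 1) = 3 ∨ s * (4 * m i + 2 * n + 1) = -1 := by
    rcases Int.even_or_odd n with ⟨t, ht⟩ | ⟨t, ht⟩
    · exact ⟨-1, Or.inr rfl, fun i => by have := hk_mem i; omega⟩
    · exact ⟨1, Or.inl rfl, fun i => by have := hk_mem i; omega⟩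
  refine ⟨s, hs, _, card_filter_eq_three_of_sum_eq_zero hsk ?_, fun i => ?_⟩
  · rw [← mul_sum, hsum, mul_zero]
  · have := hsk i
    rcases hs with rfl | rfl <;> split_ifs with h <;>
      simp only [mem_filter, mem_univ, true_and] at h <;> omega

noncomputable def quarterVec (T : Finset (Fin 8)) (i : Fin 8) : ℝ :=
  if i ∈ T then 3 / 4 else -1 / 4

theorem IsQuarterCoset.exists_eq_smul_quarterVec {x : ℝ⁸} (hx : IsQuarterCoset x) (hx0 : x ∈ V7)
    (hxx : ⟪x, x⟫ = 3 / 2) : ∃ s : ℝ, (s = 1 ∨ s = -1) ∧ ∃ T : Finset (Fin 8), T.card = 2 ∧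
      ∀ i, x i = s * quarterVec T i := by
  obtain ⟨n, hx⟩ := hx
  choose m hm using hx
  have hcast : ∀ i, ((4 * m i + 2 * n + 1 : ℤ) : ℝ) = 4 * x i := fun i => by
    rw [hm]; push_cast; ring
  have hsum : ((∑ i, (4 * m i + 2 * n + 1) : ℤ) : ℝ) = 0 := by
    simp only [Int.cast_sum, hcast, ← mul_sum, (mem_V7_iff x).1 hx0, mul_zero]
  have hsq : ((∑ i, (4 * m i + 2 * n + 1) ^ 2 : ℤ) : ℝ) = 24 := by
    rw [EuclideanSpace.real_inner_eq_sum] at hxx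
    simp_rw [Int.cast_sum, Int.cast_pow, hcast, mul_pow, ← mul_sum, sq, hxx]
    norm_num
  obtain ⟨s, hs, T, hT, hsT⟩ := exists_sign_finset_of_sum_sq_eq m n (by exact_mod_cast hsum)
    (by exact_mod_cast hsq)
  refine ⟨s, by rcases hs with rfl | rfl <;> norm_num, T, hT, fun i => ?_⟩
  have := congrArg (Int.cast : ℤ → ℝ) (hsT i)
  rw [hcast] at this
  unfold quarterVec
  split_ifs at this ⊢ <;> push_cast at this <;> linarith

noncomputable def rootDiff (p q : Fin 8) : ℝ⁸ :=
  EuclideanSpace.single p 1 - EuclideanSpace.single q 1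

lemma rootDiff_apply (p q i : Fin 8) :
    rootDiff p q i = (if i = p then 1 else 0) - (if i = q then 1 else 0) := by
  simp [rootDiff, PiLp.single_apply]

lemma rootDiff_mem_R7 {p q : Fin 8} (hpq : p ≠ q) : rootDiff p q ∈ R7 := by
  have hsum : ∑ i, rootDiff p q i = 0 := by simp [rootDiff_apply]
  refine ⟨⟨Or.inl fun i => ⟨(if i = p then 1 else 0) - (if i = q then 1 else 0), ?_⟩,
    0, by simp [hsum]⟩, hsum, ?_⟩
  · rw [rootDiff_apply]; push_cast; rfl
  · rw [EuclideanSpace.real_inner_eq_sum]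
    norm_num [rootDiff_apply, mul_sub, mul_ite, sum_sub_distrib, hpq, hpq.symm]

lemma sub_inner_rootDiff_smul_apply (v : ℝ⁸) (p q i : Fin 8) :
    (v - ⟪v, rootDiff p q⟫ • rootDiff p q) i = v (swap p q i) := by
  have : ⟪v, rootDiff p q⟫ = v p - v q := by
    simp [rootDiff, inner_sub_right, EuclideanSpace.inner_single_right]
  rw [PiLp.sub_apply, PiLp.smul_apply, this, rootDiff_apply, swap_apply_def, smul_eq_mul]
  split_ifs <;> simp_all

lemma exists_mem_W7_apply_eq_comp (v : V7) (σ : Perm (Fin 8)) :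
    ∃ w ∈ W7, ∀ i, (w v : ℝ⁸) i = (v : ℝ⁸) (σ i) := by
  induction σ using Perm.swap_induction_on' with
  | one => exact ⟨1, one_mem _, fun i => rfl⟩
  | mul_swap σ p q hpq ih =>
    obtain ⟨w, hw, hwv⟩ := ih
    refine ⟨_ * w, mul_mem (reflection_mem_W7 (rootDiff_mem_R7 hpq)) hw, fun i => ?_⟩
    rw [LinearIsometryEquiv.coe_mul, Function.comp_apply,
      coe_reflection_of_mem_R7 (rootDiff_mem_R7 hpq), sub_inner_rootDiff_smul_apply, hwv]
    rfl

noncomputable def halfRoot : ℝ⁸ :=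
  WithLp.toLp 2 ![1/2, 1/2, 1/2, -1/2, -1/2, -1/2, -1/2, 1/2]

lemma halfRoot_mem_R7 : halfRoot ∈ R7 := by
  have hsum : ∑ i, halfRoot i = 0 := by
    simp [Fin.sum_univ_eight, halfRoot]; norm_num
  refine ⟨⟨Or.inr fun i => ?_, 0, by simp [hsum]⟩, hsum, ?_⟩
  · fin_cases i
    all_goals first | (use 0; norm_num [halfRoot]; done) | (use -1; norm_num [halfRoot])
  · rw [EuclideanSpace.real_inner_eq_sum]
    simp [Fin.sum_univ_eight, halfRoot]; norm_num

lemma aV_apply_swap (i : Fin 8) : (aV : ℝ⁸) (swap 1 7 i) = baseVec i := by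
  fin_cases i <;> simp [aV, baseVec, swap_apply_def]

lemma aV_sub_inner_halfRoot_smul_apply (i : Fin 8) :
    ((aV : ℝ⁸) - ⟪(aV : ℝ⁸), halfRoot⟫ • halfRoot) i = -baseVec (swap 0 2 i) := by
  have : ⟪(aV : ℝ⁸), halfRoot⟫ = 1 := by
    rw [EuclideanSpace.real_inner_eq_sum]
    simp [Fin.sum_univ_eight, aV, halfRoot]; norm_num
  rw [this, one_smul]
  fin_cases i <;> simp [aV, halfRoot, baseVec, swap_apply_def] <;> norm_num

lemma exists_mem_W7_apply_aV_eq {s : ℝ} (hs : s = 1 ∨ s = -1) (σ : Perm (Fin 8)) :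
    ∃ w ∈ W7, ∀ i, (w aV : ℝ⁸) i = s * baseVec (σ i) := by
  rcases hs with rfl | rfl
  · obtain ⟨w, hw, hwa⟩ := exists_mem_W7_apply_eq_comp aV (swap 1 7 * σ)
    exact ⟨w, hw, fun i => by rw [hwa, Perm.mul_apply, aV_apply_swap, one_mul]⟩
  · set r := (ℝ ∙ (⟨halfRoot, halfRoot_mem_R7.2.1⟩ : V7))ᗮ.reflection
    obtain ⟨w, hw, hwa⟩ := exists_mem_W7_apply_eq_comp (r aV) (swap 0 2 * σ)
    refine ⟨w * r, mul_mem hw (reflection_mem_W7 halfRoot_mem_R7), fun i => ?_⟩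
    rw [LinearIsometryEquiv.coe_mul, Function.comp_apply, hwa,
      coe_reflection_of_mem_R7 halfRoot_mem_R7, aV_sub_inner_halfRoot_smul_apply, Perm.mul_apply, swap_apply_self, neg_one_mul]

lemma quarterVec_apply_perm (T : Finset (Fin 8)) (σ : Perm (Fin 8)) (i : Fin 8) :
    quarterVec T (σ i) = quarterVec (σ⁻¹ • T) i := by
  simp only [quarterVec, mem_inv_smul_finset_iff, Perm.smul_def]

lemma baseVec_eq_quarterVec : baseVec = quarterVec {0, 1} := by
  ext i
  fin_cases i <;> simp [baseVec, quarterVec]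

lemma exists_perm_quarterVec_eq_baseVec {T : Finset (Fin 8)} (hT : T.card = 2) :
    ∃ σ : Perm (Fin 8), ∀ i, quarterVec T i = baseVec (σ i) := by
  have := Set.powersetCard.isPretransitive (α := Fin 8) (n := 2)
  obtain ⟨σ, hσ⟩ := MulAction.exists_smul_eq (Perm (Fin 8))
    (⟨{0, 1}, Set.powersetCard.mem_iff.2 rfl⟩ : Set.powersetCard (Fin 8) 2)
    ⟨T, Set.powersetCard.mem_iff.2 hT⟩
  have hσT : σ • ({0, 1} : Finset (Fin 8)) = T := congrArg Subtype.val hσ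
  refine ⟨σ⁻¹, fun i => ?_⟩
  rw [baseVec_eq_quarterVec, quarterVec_apply_perm, inv_inv, hσT]

lemma exists_quarterVec_eq_baseVec (σ : Perm (Fin 8)) :
    ∃ T : Finset (Fin 8), T.card = 2 ∧ ∀ i, baseVec (σ i) = quarterVec T i :=
  ⟨σ⁻¹ • {0, 1}, by rw [card_smul_finset]; rfl, fun i => by
    rw [baseVec_eq_quarterVec, quarterVec_apply_perm]⟩

lemma aV_apply (i : Fin 8) : (aV : ℝ⁸) i = quarterVec {0, 7} i := by
  fin_cases i <;> simp [aV, quarterVec]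

lemma isQuarterCoset_aV : IsQuarterCoset aV :=
  ⟨1, fun i => ⟨if i ∈ ({0, 7} : Finset (Fin 8)) then 0 else -1, by
    rw [aV_apply, quarterVec]; split_ifs <;> norm_num⟩⟩

lemma inner_aV_self : ⟪(aV : ℝ⁸), (aV : ℝ⁸)⟫ = 3 / 2 := by
  rw [EuclideanSpace.real_inner_eq_sum]
  simp [Fin.sum_univ_eight, aV]; norm_num

lemma exists_mem_W7_apply_aV_eq_smul_quarterVec {s : ℝ} (hs : s = 1 ∨ s = -1)
    {T : Finset (Fin 8)} (hT : T.card = 2) :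
    ∃ w ∈ W7, ∀ i, (w aV : ℝ⁸) i = s * quarterVec T i := by
  obtain ⟨σ, hσ⟩ := exists_perm_quarterVec_eq_baseVec hT
  obtain ⟨w, hw, hwa⟩ := exists_mem_W7_apply_aV_eq hs σ
  exact ⟨w, hw, fun i => by rw [hwa, hσ]⟩

theorem mem_W7_orbit_aV_iff (x : V7) :
    (∃ w ∈ W7, w aV = x) ↔ ∃ s : ℝ, (s = 1 ∨ s = -1) ∧ ∃ T : Finset (Fin 8), T.card = 2 ∧
      ∀ i, (x : ℝ⁸) i = s * quarterVec T i := by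
  constructor
  · rintro ⟨w, hw, rfl⟩
    refine (isQuarterCoset_aV.W7_apply hw).exists_eq_smul_quarterVec (w aV).2 ?_
    rw [← Submodule.coe_inner, LinearIsometryEquiv.inner_map_map, Submodule.coe_inner,
      inner_aV_self]
  · rintro ⟨s, hs, T, hT, hx⟩
    obtain ⟨w, hw, hwa⟩ := exists_mem_W7_apply_aV_eq_smul_quarterVec hs hT
    exact ⟨w, hw, Subtype.ext (PiLp.ext fun i => by rw [hwa, hx])⟩

lemma quarterVec_injective : Function.Injective quarterVec := by
  intro T T' h
  ext i
  have := congrFun h i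
  unfold quarterVec at this
  split_ifs at this with h1 h2 h2 <;> norm_num at this <;> simp [h1, h2]

lemma quarterVec_ne_neg (T T' : Finset (Fin 8)) (i : Fin 8) :
    quarterVec T i ≠ -quarterVec T' i := by
  unfold quarterVec
  split_ifs <;> norm_num

lemma injOn_smul_quarterVec :
    Set.InjOn (fun p : ℝ × Finset (Fin 8) => p.1 • quarterVec p.2)
      {p | p.1 = 1 ∨ p.1 = -1} := by
  rintro ⟨s, T⟩ hs ⟨s', T'⟩ hs' h
  simp only [Set.mem_ofPred_eq] at hs hs' h
  rcases hs with rfl | rfl <;> rcases hs' with rfl | rfl <;>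
    simp only [one_smul, neg_smul, neg_inj] at h
  · rw [quarterVec_injective h]
  · exact absurd (congrFun h 0) (quarterVec_ne_neg T T' 0)
  · exact absurd (congrFun h 0).symm (quarterVec_ne_neg T' T 0)
  · rw [quarterVec_injective h]

theorem ncard_W7_orbit_aV : {x : V7 | ∃ w ∈ W7, w aV = x}.ncard = 56 := by
  let D : Finset (ℝ × Finset (Fin 8)) := {1, -1} ×ˢ powersetCard 2 univ
  have hD : ∀ p ∈ D, (p.1 = 1 ∨ p.1 = -1) ∧ p.2.card = 2 := by
    simp [D, mem_product, mem_powersetCard]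
  have himage : (fun x : V7 => ⇑(x : ℝ⁸)) '' {x | ∃ w ∈ W7, w aV = x} =
      (fun p : ℝ × Finset (Fin 8) => p.1 • quarterVec p.2) '' D := by
    ext f
    constructor
    · rintro ⟨x, hx, rfl⟩
      obtain ⟨s, hs, T, hT, hxT⟩ := (mem_W7_orbit_aV_iff x).1 hx
      exact ⟨(s, T), by simp [D, mem_powersetCard, hs, hT], funext fun i => by
        simp [hxT]⟩
    · rintro ⟨⟨s, T⟩, hp, rfl⟩
      obtain ⟨hs, hT⟩ := hD _ hp
      obtain ⟨w, hw, hwa⟩ := exists_mem_W7_apply_aV_eq_smul_quarterVec hs hT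
      exact ⟨w aV, ⟨w, hw, rfl⟩, funext fun i => by simp [hwa]⟩
  have hinj : Function.Injective fun x : V7 => ⇑(x : ℝ⁸) := fun x y h =>
    Subtype.ext (WithLp.ofLp_injective 2 h)
  rw [← Set.ncard_image_of_injective _ hinj, himage,
    (injOn_smul_quarterVec.mono fun p hp => (hD p hp).1).ncard_image,
    Set.ncard_coe_finset, card_product, card_powersetCard, card_pair (by norm_num)]
  rfl

theorem E7_orbit_of_a
    (A : Set V7) (hA : A = {x : V7 | ∃ w ∈ W7, w aV = x}) :
    A.ncard = 56 ∧
    ∀ x : V7, x ∈ A ↔ ∃ σ : Equiv.Perm (Fin 8), ∃ s : ℝ, (s = 1 ∨ s = -1) ∧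
      ∀ i : Fin 8, (x : EuclideanSpace ℝ (Fin 8)) i = s * baseVec (σ i) := by
  subst hA
  refine ⟨ncard_W7_orbit_aV, fun x => (mem_W7_orbit_aV_iff x).trans ⟨?_, ?_⟩⟩
  · rintro ⟨s, hs, T, hT, hx⟩
    obtain ⟨σ, hσ⟩ := exists_perm_quarterVec_eq_baseVec hT
    exact ⟨σ, s, hs, fun i => by rw [hx, hσ]⟩
  · rintro ⟨σ, s, hs, hx⟩
    obtain ⟨T, hT, hσT⟩ := exists_quarterVec_eq_baseVec σ
    exact ⟨s, hs, T, hT, fun i => by rw [hx, hσT]⟩
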